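/- Let $S, T \in \mathbb{M}_n^+$, let $p \ge 1$, and let $\|\cdot\|$ be any symmetric norm on $\mathbb{M}_n$. Then $\left\| \left( \frac{S+T}{2} \right)^p \right\| \le \frac{\|S^p\| + \|T^p\|}{2}$, where powers of positive semi-definite matrices are taken by functional calculus. -/

import Mathlib

open Matrix
open scoped ComplexOrder

/-- The absolute value `|Z| = (Zᴴ Z)^(1/2)` of a square complex matrix. -/
noncomputable def matAbs {m : Type*} [Fintype m] [DecidableEq m]
    (Z : Matrix m m ℂ) : Matrix m m ℂ :=
  (Matrix.posSemidef_conjTranspose_mul_self Z).1.eigenvectorUnitary.1 *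
    Matrix.diagonal ((↑) ∘ (Real.sqrt ∘ (Matrix.posSemidef_conjTranspose_mul_self Z).1.eigenvalues)) *
    (star (Matrix.posSemidef_conjTranspose_mul_self Z).1.eigenvectorUnitary : Matrix m m ℂ)

/-- Functional calculus: apply `f : ℝ → ℝ` to the eigenvalues of a Hermitian matrix
(junk value `0` if the matrix is not Hermitian). -/
noncomputable def hermApply {m : Type*} [Fintype m] [DecidableEq m]
    (f : ℝ → ℝ) (S : Matrix m m ℂ) : Matrix m m ℂ :=
  if hS : S.IsHermitian then
    (hS.eigenvectorUnitary : Matrix m m ℂ) *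
      Matrix.diagonal (fun i => (f (hS.eigenvalues i) : ℂ)) *
      (star (hS.eigenvectorUnitary : Matrix m m ℂ))
  else 0

/-- Real power of a positive semi-definite matrix by functional calculus. -/
noncomputable def matPow {m : Type*} [Fintype m] [DecidableEq m]
    (S : Matrix m m ℂ) (p : ℝ) : Matrix m m ℂ :=
  hermApply (fun x => x ^ p) S

/-- A symmetric (unitarily invariant) norm on complex `m × m` matrices. -/
structure IsSymmetricNorm {m : Type*} [Fintype m] [DecidableEq m]
    (N : Matrix m m ℂ → ℝ) : Prop where
  add_le : ∀ A B, N (A + B) ≤ N A + N B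
  smul : ∀ (c : ℂ) (A), N (c • A) = ‖c‖ * N A
  eq_zero_of : ∀ A, N A = 0 → A = 0
  unitary_mul_left : ∀ (U : Matrix.unitaryGroup m ℂ) (A), N (U * A) = N A
  mul_unitary_right : ∀ (U : Matrix.unitaryGroup m ℂ) (A), N (A * U) = N A

/-- Eigenvalues of a Hermitian matrix (junk value `0` if not Hermitian). -/
noncomputable def eigVals {m : Type*} [Fintype m] [DecidableEq m]
    (Z : Matrix m m ℂ) : m → ℝ :=
  if hZ : Z.IsHermitian then hZ.eigenvalues else 0

/-- Eigenvalues of a Hermitian `n × n` matrix listed in decreasing order. -/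
noncomputable def eigDown {n : ℕ} (Z : Matrix (Fin n) (Fin n) ℂ) : Fin n → ℝ :=
  fun i => (eigVals Z ∘ Tuple.sort (eigVals Z)) i.rev

/-- `Z ^ ↓`: the diagonal matrix listing the eigenvalues of `Z` in decreasing order. -/
noncomputable def downMat {n : ℕ} (Z : Matrix (Fin n) (Fin n) ℂ) : Matrix (Fin n) (Fin n) ℂ :=
  Matrix.diagonal (fun i => (eigDown Z i : ℂ))

/-- Schatten `p`-norm. -/
noncomputable def schattenNorm {m : Type*} [Fintype m] [DecidableEq m]
    (p : ℝ) (Z : Matrix m m ℂ) : ℝ :=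
  (∑ i, eigVals (matAbs Z) i ^ p) ^ (1 / p)

/-- Operator norm (largest singular value). -/
noncomputable def opNormInf {m : Type*} [Fintype m] [DecidableEq m]
    (Z : Matrix m m ℂ) : ℝ :=
  ⨆ i, Real.sqrt (eigVals (Zᴴ * Z) i)

/-- Numerical range. -/
def numRange {m : Type*} [Fintype m] (X : Matrix m m ℂ) : Set ℂ :=
  {z | ∃ x : m → ℂ, ∑ i, ‖x i‖ ^ 2 = 1 ∧ dotProduct (star x) (X *ᵥ x) = z}

/-- Numerical radius. -/
noncomputable def numRadius {m : Type*} [Fintype m] (X : Matrix m m ℂ) : ℝ :=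
  sSup ((fun z : ℂ => ‖z‖) '' numRange X)

/-!
Diagonalize `C = (S + T) / 2` by a unitary `U`, with eigenvalues `μ`. For a positive
semidefinite `X` and a unit vector `u`, Jensen's inequality for the spectral measure of `X` at `u`
gives `⟪u, X u⟫ ^ p ≤ ⟪u, X ^ p u⟫`; together with the convexity of `t ↦ t ^ p` this bounds
`μ i ^ p` by the `i`-th diagonal entry of `U* ((S ^ p + T ^ p) / 2) U`. A symmetric norm is
monotone on nonnegative diagonal matrices and does not increase under pinching (the average of the
conjugates by all sign matrices), so `‖C ^ p‖ ≤ ‖(S ^ p + T ^ p) / 2‖ ≤ (‖S ^ p‖ + ‖T ^ p‖) / 2`.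
-/

lemma Matrix.diagonal_mem_unitaryGroup {m : Type*} [Fintype m] [DecidableEq m] {z : m → ℂ}
    (hz : ∀ i, z i * star (z i) = 1) : diagonal z ∈ unitaryGroup m ℂ := by
  rw [mem_unitaryGroup_iff, star_eq_conjTranspose, diagonal_conjTranspose,
    diagonal_mul_diagonal, ← diagonal_one]
  exact congrArg diagonal (funext hz)

lemma Matrix.star_mul_mul_apply_self {m : Type*} [Fintype m] (U A : Matrix m m ℂ) (i : m) :
    (star U * A * U) i i = star (Uᵀ i) ⬝ᵥ (A *ᵥ Uᵀ i) := by
  rw [mul_mul_apply]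
  rfl

section

variable {m : Type*} [Fintype m] [DecidableEq m]

lemma intCast_units_mul_self (u : ℤˣ) : ((u : ℤ) : ℂ) * (u : ℤ) = 1 := by
  rcases Int.units_eq_one_or u with rfl | rfl <;> simp

lemma sum_units_apply_mul_apply {i j : m} (hij : i ≠ j) :
    ∑ ε : m → ℤˣ, (ε i : ℤ) * ε j = 0 := by
  -- flipping the sign of the `i`-th coordinate negates every summand
  have h := Equiv.sum_comp (Equiv.mulRight (Pi.mulSingle i (-1) : m → ℤˣ))
    (fun ε : m → ℤˣ => (ε i : ℤ) * ε j)
  simp only [Equiv.coe_mulRight, Pi.mul_apply, Pi.mulSingle_eq_same,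
    Pi.mulSingle_eq_of_ne hij.symm, mul_neg, mul_one, Units.val_neg, neg_mul,
    Finset.sum_neg_distrib] at h
  linarith

noncomputable def signMatrix (ε : m → ℤˣ) : Matrix m m ℂ := diagonal fun i => ((ε i : ℤ) : ℂ)

lemma signMatrix_mem_unitaryGroup (ε : m → ℤˣ) : signMatrix ε ∈ unitaryGroup m ℂ :=
  diagonal_mem_unitaryGroup fun i => by
    rw [star_intCast]
    exact intCast_units_mul_self (ε i)

lemma sum_signMatrix_conj (A : Matrix m m ℂ) :
    ∑ ε : m → ℤˣ, signMatrix ε * A * signMatrix ε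
      = (Fintype.card (m → ℤˣ) : ℂ) • diagonal A.diag := by
  ext i j
  simp only [signMatrix, Matrix.sum_apply, diagonal_mul, mul_diagonal, Matrix.smul_apply,
    smul_eq_mul]
  rcases eq_or_ne i j with rfl | hij
  · have h : ∀ ε : m → ℤˣ, ((ε i : ℤ) : ℂ) * A i i * (ε i : ℤ) = A i i := fun ε => by
      rw [mul_right_comm, intCast_units_mul_self, one_mul]
    simp [h]
  · have h := congrArg (fun z : ℤ => (z : ℂ) * A i j) (sum_units_apply_mul_apply hij)
    simp only [Int.cast_sum, Int.cast_mul, Finset.sum_mul, Int.cast_zero, zero_mul] at h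
    rw [diagonal_apply_ne _ hij, mul_zero, ← h]
    exact Finset.sum_congr rfl fun ε _ => by ring

end

namespace IsSymmetricNorm

variable {m : Type*} [Fintype m] [DecidableEq m] {N : Matrix m m ℂ → ℝ}

lemma map_zero (hN : IsSymmetricNorm N) : N 0 = 0 := by
  simpa using hN.smul 0 0

lemma sum_le (hN : IsSymmetricNorm N) {ι : Type*} (s : Finset ι) (A : ι → Matrix m m ℂ) :
    N (∑ i ∈ s, A i) ≤ ∑ i ∈ s, N (A i) :=
  Finset.le_sum_of_subadditive N hN.map_zero.le hN.add_le s A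

lemma half_smul_add_le (hN : IsSymmetricNorm N) (A B : Matrix m m ℂ) :
    N ((1 / 2 : ℂ) • (A + B)) ≤ (N A + N B) / 2 := by
  rw [hN.smul, one_div, norm_inv, Complex.norm_two]
  linarith [hN.add_le A B]

lemma conj_unitary (hN : IsSymmetricNorm N) {U : Matrix m m ℂ} (hU : U ∈ unitaryGroup m ℂ)
    (A : Matrix m m ℂ) : N (U * A * star U) = N A := by
  rw [hN.mul_unitary_right ⟨star U, Unitary.star_mem hU⟩, hN.unitary_mul_left ⟨U, hU⟩]

lemma star_conj_unitary (hN : IsSymmetricNorm N) {U : Matrix m m ℂ}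
    (hU : U ∈ unitaryGroup m ℂ) (A : Matrix m m ℂ) : N (star U * A * U) = N A := by
  simpa using hN.conj_unitary (Unitary.star_mem hU) A

lemma diagonal_ofReal_mul_le (hN : IsSymmetricNorm N) {c : m → ℝ} (hc : ∀ i, |c i| ≤ 1)
    (A : Matrix m m ℂ) : N (diagonal (fun i => (c i : ℂ)) * A) ≤ N A := by
  -- `diagonal c` is the mean of the unitary `diagonal z` and its adjoint
  set z : m → ℂ := fun i => c i + Real.sqrt (1 - c i ^ 2) * Complex.I
  have hz : ∀ i, z i * star (z i) = 1 := fun i => by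
    have h : Real.sqrt (1 - c i ^ 2) ^ 2 = 1 - c i ^ 2 :=
      Real.sq_sqrt (by nlinarith [abs_le.mp (hc i)])
    rw [Complex.star_def, Complex.mul_conj, Complex.normSq_add_mul_I, h]
    simp
  have hZ : diagonal z ∈ unitaryGroup m ℂ := diagonal_mem_unitaryGroup hz
  have hmean : diagonal (fun i => (c i : ℂ)) = (1 / 2 : ℂ) • (diagonal z + star (diagonal z)) := by
    rw [star_eq_conjTranspose, diagonal_conjTranspose, diagonal_add, ← diagonal_smul]
    refine congrArg diagonal (funext fun i => ?_)
    simp only [Pi.smul_apply, Pi.star_apply, Complex.star_def, Complex.add_conj, z]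
    simp
  calc N (diagonal (fun i => (c i : ℂ)) * A)
      = N ((1 / 2 : ℂ) • (diagonal z * A + star (diagonal z) * A)) := by
        rw [hmean, smul_mul_assoc, add_mul]
    _ ≤ (N (diagonal z * A) + N (star (diagonal z) * A)) / 2 := hN.half_smul_add_le _ _
    _ = N A := by
        rw [hN.unitary_mul_left ⟨_, hZ⟩, hN.unitary_mul_left ⟨_, Unitary.star_mem hZ⟩]
        ring

lemma diagonal_ofReal_mono (hN : IsSymmetricNorm N) {d e : m → ℝ} (hd : ∀ i, 0 ≤ d i)
    (hde : ∀ i, d i ≤ e i) :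
    N (diagonal (fun i => (d i : ℂ))) ≤ N (diagonal (fun i => (e i : ℂ))) := by
  have hc : ∀ i, |d i / e i| ≤ 1 := fun i =>
    abs_le.mpr ⟨by linarith [div_nonneg (hd i) ((hd i).trans (hde i))],
      div_le_one_of_le₀ (hde i) ((hd i).trans (hde i))⟩
  have hfac : diagonal (fun i => (d i : ℂ))
      = diagonal (fun i => ((d i / e i : ℝ) : ℂ)) * diagonal (fun i => (e i : ℂ)) := by
    rw [diagonal_mul_diagonal]
    refine congrArg diagonal (funext fun i => ?_)
    rcases (hd i).trans (hde i) |>.eq_or_lt with he | he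
    · have hd0 : d i = 0 := le_antisymm (he ▸ hde i) (hd i)
      simp [hd0, ← he]
    · push_cast
      rw [div_mul_cancel₀ _ (by exact_mod_cast he.ne')]
  rw [hfac]
  exact hN.diagonal_ofReal_mul_le hc _

lemma diagonal_diag_le (hN : IsSymmetricNorm N) (A : Matrix m m ℂ) :
    N (diagonal A.diag) ≤ N A := by
  set K : ℕ := Fintype.card (m → ℤˣ)
  have hK : (K : ℝ) ≠ 0 := Nat.cast_ne_zero.mpr Fintype.card_ne_zero
  have hconj : ∀ ε, N (signMatrix ε * A * signMatrix ε) = N A := fun ε => by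
    rw [hN.mul_unitary_right ⟨_, signMatrix_mem_unitaryGroup ε⟩,
      hN.unitary_mul_left ⟨_, signMatrix_mem_unitaryGroup ε⟩]
  have hA : diagonal A.diag = (K : ℂ)⁻¹ • ∑ ε, signMatrix ε * A * signMatrix ε := by
    rw [sum_signMatrix_conj, smul_smul, inv_mul_cancel₀ (by exact_mod_cast hK), one_smul]
  calc N (diagonal A.diag)
      = (K : ℝ)⁻¹ * N (∑ ε, signMatrix ε * A * signMatrix ε) := by
        rw [hA, hN.smul, norm_inv, Complex.norm_natCast]
    _ ≤ (K : ℝ)⁻¹ * ∑ ε, N (signMatrix ε * A * signMatrix ε) := by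
        gcongr
        exact hN.sum_le _ _
    _ = N A := by
        rw [Finset.sum_congr rfl fun ε _ => hconj ε, Finset.sum_const, Finset.card_univ,
          nsmul_eq_mul, inv_mul_cancel_left₀ hK]

end IsSymmetricNorm

section FunctionalCalculus

variable {m : Type*} [Fintype m] [DecidableEq m] {X : Matrix m m ℂ}

lemma hermApply_of_isHermitian (hX : X.IsHermitian) (f : ℝ → ℝ) :
    hermApply f X = (hX.eigenvectorUnitary : Matrix m m ℂ) *
      diagonal (fun i => (f (hX.eigenvalues i) : ℂ)) *
        star (hX.eigenvectorUnitary : Matrix m m ℂ) :=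
  dif_pos hX

lemma hermApply_eq_cfc (hX : X.IsHermitian) (f : ℝ → ℝ) : hermApply f X = cfc f X := by
  rw [hX.cfc_eq, IsHermitian.cfc, Unitary.conjStarAlgAut_apply, hermApply_of_isHermitian hX]
  rfl

lemma isHermitian_hermApply (hX : X.IsHermitian) (f : ℝ → ℝ) : (hermApply f X).IsHermitian := by
  rw [hermApply_eq_cfc hX]
  exact cfc_predicate f X

lemma star_dotProduct_hermApply_mulVec (hX : X.IsHermitian) (f : ℝ → ℝ) (u : m → ℂ) :
    star u ⬝ᵥ (hermApply f X *ᵥ u) =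
      ↑(∑ j, Complex.normSq ((star (hX.eigenvectorUnitary : Matrix m m ℂ) *ᵥ u) j) *
        f (hX.eigenvalues j)) := by
  set V : Matrix m m ℂ := (hX.eigenvectorUnitary : Matrix m m ℂ)
  have hv : star u ᵥ* V = star (star V *ᵥ u) := by
    rw [star_mulVec, ← star_eq_conjTranspose, star_star]
  rw [hermApply_of_isHermitian hX, ← mulVec_mulVec, ← mulVec_mulVec, dotProduct_mulVec, hv]
  simp only [dotProduct, mulVec_diagonal, Pi.star_apply, Complex.ofReal_sum, Complex.ofReal_mul,
    Complex.normSq_eq_conj_mul_self, Complex.star_def]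
  exact Finset.sum_congr rfl fun j _ => by ring

lemma re_star_dotProduct_mulVec_rpow_le (hX : X.PosSemidef) {p : ℝ} (hp : 1 ≤ p) {u : m → ℂ}
    (hu : star u ⬝ᵥ u = 1) :
    (star u ⬝ᵥ (X *ᵥ u)).re ^ p ≤ (star u ⬝ᵥ (matPow X p *ᵥ u)).re := by
  set w : m → ℝ := fun j =>
    Complex.normSq ((star (hX.1.eigenvectorUnitary : Matrix m m ℂ) *ᵥ u) j)
  have hw : ∑ j, w j = 1 := by
    have h := star_dotProduct_hermApply_mulVec hX.1 (fun _ => 1) u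
    rw [hermApply_eq_cfc hX.1, cfc_const_one ℝ X hX.1.isSelfAdjoint, one_mulVec, hu] at h
    simpa using (Complex.ofReal_injective h.symm).trans (by simp)
  have hid : hermApply (fun x => x) X = X :=
    (hermApply_eq_cfc hX.1 _).trans (cfc_id ℝ X hX.1.isSelfAdjoint)
  conv_lhs => rw [← hid]
  rw [matPow, star_dotProduct_hermApply_mulVec hX.1, star_dotProduct_hermApply_mulVec hX.1,
    Complex.ofReal_re, Complex.ofReal_re]
  exact Real.rpow_arith_mean_le_arith_mean_rpow _ w _ (fun j _ => Complex.normSq_nonneg _)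
    hw (fun j _ => hX.eigenvalues_nonneg j) hp

lemma re_star_dotProduct_midpoint_rpow_le {S T : Matrix m m ℂ} (hS : S.PosSemidef)
    (hT : T.PosSemidef) {p : ℝ} (hp : 1 ≤ p) {u : m → ℂ} (hu : star u ⬝ᵥ u = 1) :
    (star u ⬝ᵥ (((1 / 2 : ℂ) • (S + T)) *ᵥ u)).re ^ p ≤
      (star u ⬝ᵥ (((1 / 2 : ℂ) • (matPow S p + matPow T p)) *ᵥ u)).re := by
  have hmid : ∀ A B : Matrix m m ℂ, (star u ⬝ᵥ (((1 / 2 : ℂ) • (A + B)) *ᵥ u)).re =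
      1 / 2 * (star u ⬝ᵥ (A *ᵥ u)).re + 1 / 2 * (star u ⬝ᵥ (B *ᵥ u)).re := fun A B => by
    simp [smul_mulVec, add_mulVec, dotProduct_add, dotProduct_smul]
  rw [hmid, hmid]
  calc _ ≤ 1 / 2 * (star u ⬝ᵥ (S *ᵥ u)).re ^ p + 1 / 2 * (star u ⬝ᵥ (T *ᵥ u)).re ^ p :=
        (convexOn_rpow hp).2 (hS.re_dotProduct_nonneg u) (hT.re_dotProduct_nonneg u)
          (by norm_num) (by norm_num) (by norm_num)
    _ ≤ _ := by
        gcongr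
        exacts [re_star_dotProduct_mulVec_rpow_le hS hp hu,
          re_star_dotProduct_mulVec_rpow_le hT hp hu]

end FunctionalCalculus

theorem power_mean_norm_bound {n : ℕ} (S T : Matrix (Fin n) (Fin n) ℂ)
    (hS : S.PosSemidef) (hT : T.PosSemidef)
    (p : ℝ) (hp : 1 ≤ p)
    (N : Matrix (Fin n) (Fin n) ℂ → ℝ) (hN : IsSymmetricNorm N) :
    N (matPow ((1 / 2 : ℂ) • (S + T)) p) ≤ (N (matPow S p) + N (matPow T p)) / 2 := by
  set C := (1 / 2 : ℂ) • (S + T)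
  set M := (1 / 2 : ℂ) • (matPow S p + matPow T p)
  have hhalf : (0 : ℂ) ≤ 1 / 2 := by positivity
  have hC : C.PosSemidef := (hS.add hT).smul hhalf
  have hM : M.IsHermitian :=
    ((isHermitian_hermApply hS.1 _).add (isHermitian_hermApply hT.1 _)).smul
      (IsSelfAdjoint.of_nonneg hhalf)
  set U : Matrix (Fin n) (Fin n) ℂ := (hC.1.eigenvectorUnitary : Matrix (Fin n) (Fin n) ℂ)
  set μ := hC.1.eigenvalues
  have hU : U ∈ unitaryGroup (Fin n) ℂ := hC.1.eigenvectorUnitary.2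
  have hdiagC : star U * C * U = diagonal fun i => (μ i : ℂ) := by
    have h := hC.1.conjStarAlgAut_star_eigenvectorUnitary
    rwa [Unitary.conjStarAlgAut_star_apply] at h
  have hcol : ∀ i, star (Uᵀ i) ⬝ᵥ Uᵀ i = 1 := fun i => by
    simpa [mem_unitaryGroup_iff'.mp hU] using (star_mul_mul_apply_self U 1 i).symm
  have hpoint : ∀ i, μ i ^ p ≤ ((star U * M * U) i i).re := fun i => by
    have h := re_star_dotProduct_midpoint_rpow_le hS hT hp (hcol i)
    rwa [← star_mul_mul_apply_self, ← star_mul_mul_apply_self, hdiagC, diagonal_apply_eq,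
      Complex.ofReal_re] at h
  calc N (matPow C p) = N (diagonal fun i => ((μ i ^ p : ℝ) : ℂ)) := by
        rw [matPow, hermApply_of_isHermitian hC.1]
        exact hN.conj_unitary hU _
    _ ≤ N (diagonal fun i => (((star U * M * U) i i).re : ℂ)) :=
        hN.diagonal_ofReal_mono (fun i => Real.rpow_nonneg (hC.eigenvalues_nonneg i) p) hpoint
    _ = N (diagonal (star U * M * U).diag) := by
        congr 2
        exact (isHermitian_conjTranspose_mul_mul U hM).coe_re_diag
    _ ≤ N (star U * M * U) := hN.diagonal_diag_le _
    _ = N M := hN.star_conj_unitary hU M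
    _ ≤ (N (matPow S p) + N (matPow T p)) / 2 := hN.half_smul_add_le _ _
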